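/- Read's space ℛ = (c₀, |||·|||) is weakly locally uniformly rotund: if x and a sequence (y_m) lie in the unit sphere of ℛ and |||x + y_m||| → 2, then (y_m) converges weakly to x. -/

import Mathlib

open Filter Topology NormedSpace

/-- The sup norm of a real sequence. -/
noncomputable def supNorm (x : ℕ → ℝ) : ℝ := ⨆ k, |x k|

/-- The duality pairing `⟨x, v⟩ = ∑ₖ x k * v k`. -/
noncomputable def pairing (x v : ℕ → ℝ) : ℝ := ∑' k, x k * v k

/-- Read's norm `|||x||| = ‖x‖_∞ + ∑ₙ rₙ |⟨x, vₙ⟩|`. -/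
noncomputable def readNorm (r : ℕ → ℝ) (v : ℕ → ℕ → ℝ) (x : ℕ → ℝ) : ℝ :=
  supNorm x + ∑' n, r n * |pairing x (v n)|

/-!
Every continuous functional on `ℛ` is `u ↦ ⟨u, w⟩` for some `w ∈ ℓ¹`, so it suffices that
`y_m → x` coordinatewise; by compactness of `[-1, 1]^ℕ` it is enough that every coordinatewise
cluster point `z` of `(y_m)` equals `x`. As `|||x + y_m||| → 2`, the triangle inequality becomes
asymptotically tight in each term `r_n |⟨·, v_n⟩|`, so `⟨x, v_n⟩ ⟨z, v_n⟩ ≥ 0` for all `n`. By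
density of `(v_n)` this holds for every `w ∈ ℓ¹`, which forces `z = c x` with `c ≥ 0`. Comparing
the limits of the sup-norm parts of `|||y_m|||` and `|||x + y_m|||` gives `c ≤ 1` and, because
`x ∈ c₀`, `c ≥ 1`.
-/

section SupNorm

variable {f g : ℕ → ℝ}

lemma supNorm_nonneg (f : ℕ → ℝ) : 0 ≤ supNorm f :=
  Real.iSup_nonneg fun _ => abs_nonneg _

lemma supNorm_le {C : ℝ} (hC : 0 ≤ C) (h : ∀ k, |f k| ≤ C) : supNorm f ≤ C :=
  Real.iSup_le h hC

lemma abs_le_supNorm (hf : Tendsto f atTop (𝓝 0)) (k : ℕ) : |f k| ≤ supNorm f :=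
  le_ciSup (by simpa using hf.abs.bddAbove_range) k

lemma supNorm_add_le (hf : Tendsto f atTop (𝓝 0)) (hg : Tendsto g atTop (𝓝 0)) :
    supNorm (f + g) ≤ supNorm f + supNorm g :=
  supNorm_le (add_nonneg (supNorm_nonneg f) (supNorm_nonneg g)) fun k =>
    (abs_add_le _ _).trans (add_le_add (abs_le_supNorm hf k) (abs_le_supNorm hg k))

lemma tendsto_supNorm_tail (hf : Tendsto f atTop (𝓝 0)) :
    Tendsto (fun N => supNorm fun j => if j < N then 0 else f j) atTop (𝓝 0) := by
  refine Metric.tendsto_atTop.2 fun ε hε => ?_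
  obtain ⟨K, hK⟩ := (Metric.tendsto_atTop.1 hf) (ε / 2) (half_pos hε)
  refine ⟨K, fun N hN => ?_⟩
  have htail : (supNorm fun j => if j < N then 0 else f j) ≤ ε / 2 := by
    refine supNorm_le (half_pos hε).le fun j => ?_
    split_ifs with hj
    · simpa using (half_pos hε).le
    · simpa using (hK j (hN.trans (not_lt.1 hj))).le
  rw [Real.dist_eq, sub_zero, abs_of_nonneg (supNorm_nonneg _)]
  linarith

/-- Since `f ∈ c₀`, the sup of `f + g m` is taken either on a fixed finite set of coordinates,
where `g m ≈ z`, or where `f` is negligible. -/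
lemma le_max_of_tendsto_supNorm_add {z : ℕ → ℝ} {g : ℕ → ℕ → ℝ} {A B C : ℝ}
    (hf : Tendsto f atTop (𝓝 0)) (hg : ∀ m, Tendsto (g m) atTop (𝓝 0))
    (hgz : Tendsto g atTop (𝓝 z)) (hC : ∀ k, |f k + z k| ≤ C)
    (hA : Tendsto (fun m => supNorm (f + g m)) atTop (𝓝 A))
    (hB : Tendsto (fun m => supNorm (g m)) atTop (𝓝 B)) : A ≤ max C B := by
  refine le_of_forall_pos_le_add fun ε hε => ?_
  obtain ⟨N, hN⟩ := (Metric.tendsto_atTop.1 hf) ε hε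
  have hnear : ∀ᶠ m in atTop, ∀ j ∈ Finset.range N, |g m j - z j| < ε :=
    (Finset.range N).eventually_all.2 fun j _ =>
      (Metric.tendsto_nhds.1 (tendsto_pi_nhds.1 hgz j)) ε hε
  have hle : ∀ᶠ m in atTop, supNorm (f + g m) ≤ max C (supNorm (g m)) + ε := by
    filter_upwards [hnear] with m hm
    have hbound : 0 ≤ max C (supNorm (g m)) + ε := by
      linarith [abs_nonneg (f 0 + z 0), hC 0, le_max_left C (supNorm (g m))]
    refine supNorm_le hbound fun j => ?_
    rw [Pi.add_apply]
    by_cases hj : j < N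
    · have := hm j (Finset.mem_range.2 hj)
      calc |f j + g m j| ≤ |f j + z j| + |g m j - z j| := by
            simpa using abs_add_le (f j + z j) (g m j - z j)
        _ ≤ max C (supNorm (g m)) + ε := by linarith [hC j, le_max_left C (supNorm (g m))]
    · have hfj : |f j| < ε := by simpa using hN j (not_lt.1 hj)
      calc |f j + g m j| ≤ |f j| + |g m j| := abs_add_le _ _
        _ ≤ max C (supNorm (g m)) + ε := by
          linarith [abs_le_supNorm (hg m) j, le_max_right C (supNorm (g m))]
  exact le_of_tendsto_of_tendsto hA ((tendsto_const_nhds.max hB).add_const ε) hle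

end SupNorm

section Pairing

variable {f g w : ℕ → ℝ} {C : ℝ}

lemma summable_mul_of_abs_le (hf : ∀ k, |f k| ≤ C) (hw : Summable fun k => |w k|) :
    Summable fun k => f k * w k :=
  Summable.of_abs <| (hw.mul_left C).of_nonneg_of_le (fun _ => abs_nonneg _) fun k => by
    rw [abs_mul]; exact mul_le_mul_of_nonneg_right (hf k) (abs_nonneg _)

lemma abs_pairing_le (hf : ∀ k, |f k| ≤ C) (hw : Summable fun k => |w k|) :
    |pairing f w| ≤ C * ∑' k, |w k| := by
  have hs : Summable fun k => |f k * w k| := (summable_mul_of_abs_le hf hw).abs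
  calc |pairing f w| ≤ ∑' k, |f k * w k| := by
        simpa [pairing, Real.norm_eq_abs] using norm_tsum_le_tsum_norm (f := fun k => f k * w k) hs
    _ ≤ ∑' k, C * |w k| := hs.tsum_le_tsum (fun k => by
        rw [abs_mul]; exact mul_le_mul_of_nonneg_right (hf k) (abs_nonneg _)) (hw.mul_left C)
    _ = C * ∑' k, |w k| := tsum_mul_left

lemma pairing_add_left (hf : Summable fun k => f k * w k) (hg : Summable fun k => g k * w k) :
    pairing (f + g) w = pairing f w + pairing g w := by
  simp only [pairing, Pi.add_apply, add_mul, hf.tsum_add hg]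

lemma pairing_sub_right {w' : ℕ → ℝ} (hw : Summable fun k => f k * w k)
    (hw' : Summable fun k => f k * w' k) :
    pairing f (w - w') = pairing f w - pairing f w' := by
  simp only [pairing, Pi.sub_apply, mul_sub, hw.tsum_sub hw']

lemma pairing_smul_left (c : ℝ) (f w : ℕ → ℝ) : pairing (c • f) w = c * pairing f w := by
  simp only [pairing, Pi.smul_apply, smul_eq_mul, mul_assoc, tsum_mul_left]

lemma pairing_smul_right (c : ℝ) (f w : ℕ → ℝ) : pairing f (c • w) = c * pairing f w := by
  simp only [pairing, Pi.smul_apply, smul_eq_mul, mul_left_comm _ c, tsum_mul_left]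

lemma abs_pairing_le_of_tsum_abs_eq_one (hf : ∀ k, |f k| ≤ C)
    (hw : Summable fun k => |w k|) (hw1 : ∑' k, |w k| = 1) : |pairing f w| ≤ C := by
  simpa [hw1] using abs_pairing_le hf hw

lemma abs_pairing_sub_pairing_le {w' : ℕ → ℝ} (hg : ∀ k, |g k| ≤ 1)
    (hw : Summable fun k => |w k|) (hw' : Summable fun k => |w' k|) :
    |pairing g w - pairing g w'| ≤ ∑' k, |w k - w' k| := by
  have hsub : Summable fun k => |(w - w') k| :=
    (hw.add hw').of_nonneg_of_le (fun _ => abs_nonneg _) fun k => abs_sub _ _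
  rw [← pairing_sub_right (summable_mul_of_abs_le hg hw) (summable_mul_of_abs_le hg hw')]
  simpa using abs_pairing_le hg hsub

lemma pairing_single_add_single (f : ℕ → ℝ) (j k : ℕ) (t : ℝ) :
    pairing f (Pi.single j t + Pi.single k 1) = t * f j + f k := by
  have hj : HasSum (fun i => f i * (Pi.single j t : ℕ → ℝ) i) (t * f j) := by
    convert hasSum_pi_single j (f j * t) using 1
    · ext i; rcases eq_or_ne i j with rfl | h <;> simp [*]
    · ring
  have hk : HasSum (fun i => f i * (Pi.single k 1 : ℕ → ℝ) i) (f k) := by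
    convert hasSum_pi_single k (f k) using 1
    ext i; rcases eq_or_ne i k with rfl | h <;> simp [*]
  simpa only [pairing, Pi.add_apply, mul_add] using (hj.add hk).tsum_eq

lemma summable_abs_single_add_single (j k : ℕ) (t : ℝ) :
    Summable fun i => |(Pi.single j t + Pi.single k 1 : ℕ → ℝ) i| :=
  summable_of_ne_finset_zero (s := {j, k}) fun i hi => by
    simp only [Finset.mem_insert, Finset.mem_singleton, not_or] at hi
    simp [hi.1, hi.2]

lemma tendsto_pairing_of_tendsto_pi {g : ℕ → ℕ → ℝ} (hb : ∀ m k, |g m k| ≤ C)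
    (hg : Tendsto g atTop (𝓝 f)) (hw : Summable fun k => |w k|) :
    Tendsto (fun m => pairing (g m) w) atTop (𝓝 (pairing f w)) :=
  tendsto_tsum_of_dominated_convergence (hw.mul_left C)
    (fun k => (tendsto_pi_nhds.1 hg k).mul_const (w k))
    (Eventually.of_forall fun m k => by
      rw [Real.norm_eq_abs, abs_mul]; exact mul_le_mul_of_nonneg_right (hb m k) (abs_nonneg _))

end Pairing

section ReadNorm

variable {r : ℕ → ℝ} {v : ℕ → ℕ → ℝ} {f g : ℕ → ℝ}

lemma summable_mul_abs_pairing {C : ℝ} (hr0 : ∀ n, 0 ≤ r n) (hrsum : Summable r)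
    (hv1 : ∀ n, Summable fun k => |v n k|) (hv2 : ∀ n, ∑' k, |v n k| = 1)
    (hf : ∀ k, |f k| ≤ C) : Summable fun n => r n * |pairing f (v n)| :=
  (hrsum.mul_right C).of_nonneg_of_le (fun n => mul_nonneg (hr0 n) (abs_nonneg _)) fun n =>
    mul_le_mul_of_nonneg_left (abs_pairing_le_of_tsum_abs_eq_one hf (hv1 n) (hv2 n)) (hr0 n)

lemma tsum_mul_abs_pairing_smul (r : ℕ → ℝ) (v : ℕ → ℕ → ℝ) (c : ℝ) (f : ℕ → ℝ) :
    ∑' n, r n * |pairing (c • f) (v n)| = |c| * ∑' n, r n * |pairing f (v n)| := by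
  simp only [pairing_smul_left, abs_mul, mul_left_comm _ |c|, tsum_mul_left]

lemma supNorm_le_readNorm (hr0 : ∀ n, 0 ≤ r n) : supNorm f ≤ readNorm r v f :=
  le_add_of_nonneg_right (tsum_nonneg fun n => mul_nonneg (hr0 n) (abs_nonneg _))

lemma abs_le_readNorm (hr0 : ∀ n, 0 ≤ r n) (hf : Tendsto f atTop (𝓝 0)) (k : ℕ) :
    |f k| ≤ readNorm r v f :=
  (abs_le_supNorm hf k).trans (supNorm_le_readNorm hr0)

lemma readNorm_le (hr0 : ∀ n, 0 ≤ r n) (hrsum : Summable r)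
    (hv1 : ∀ n, Summable fun k => |v n k|) (hv2 : ∀ n, ∑' k, |v n k| = 1)
    (hf : Tendsto f atTop (𝓝 0)) : readNorm r v f ≤ (1 + ∑' n, r n) * supNorm f := by
  have hseries : ∑' n, r n * |pairing f (v n)| ≤ (∑' n, r n) * supNorm f := by
    rw [← tsum_mul_right]
    exact (summable_mul_abs_pairing hr0 hrsum hv1 hv2 (abs_le_supNorm hf)).tsum_le_tsum
      (fun n => mul_le_mul_of_nonneg_left
        (abs_pairing_le_of_tsum_abs_eq_one (abs_le_supNorm hf) (hv1 n) (hv2 n)) (hr0 n))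
      (hrsum.mul_right _)
  rw [readNorm]
  linarith

lemma readNorm_add_add_defect_le (hr0 : ∀ n, 0 ≤ r n) (hrsum : Summable r)
    (hv1 : ∀ n, Summable fun k => |v n k|) (hv2 : ∀ n, ∑' k, |v n k| = 1)
    (hf : Tendsto f atTop (𝓝 0)) (hg : Tendsto g atTop (𝓝 0)) (n : ℕ) :
    readNorm r v (f + g) +
        r n * (|pairing f (v n)| + |pairing g (v n)| - |pairing (f + g) (v n)|) ≤
      readNorm r v f + readNorm r v g := by
  set D : ℕ → ℝ := fun n =>
    r n * (|pairing f (v n)| + |pairing g (v n)| - |pairing (f + g) (v n)|)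
  have hD : ∀ n, D n = r n * |pairing f (v n)| + r n * |pairing g (v n)| -
      r n * |pairing (f + g) (v n)| := fun n => by ring
  have hsf := summable_mul_abs_pairing hr0 hrsum hv1 hv2 (abs_le_supNorm hf)
  have hsg := summable_mul_abs_pairing hr0 hrsum hv1 hv2 (abs_le_supNorm hg)
  have hfg : Tendsto (f + g) atTop (𝓝 0) := add_zero (0 : ℝ) ▸ hf.add hg
  have hsfg := summable_mul_abs_pairing hr0 hrsum hv1 hv2 (abs_le_supNorm hfg)
  have hD_nonneg : ∀ n, 0 ≤ D n := fun n => by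
    simp only [D]
    rw [pairing_add_left (summable_mul_of_abs_le (abs_le_supNorm hf) (hv1 n))
      (summable_mul_of_abs_le (abs_le_supNorm hg) (hv1 n))]
    exact mul_nonneg (hr0 n) (by linarith [abs_add_le (pairing f (v n)) (pairing g (v n))])
  have hsD : Summable D := by simpa only [← hD] using (hsf.add hsg).sub hsfg
  have hDn : D n ≤ ∑' n, D n := hsD.le_tsum n fun m _ => hD_nonneg m
  rw [tsum_congr hD, (hsf.add hsg).tsum_sub hsfg, hsf.tsum_add hsg] at hDn
  simp only [readNorm]
  linarith [supNorm_add_le hf hg]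

lemma tendsto_tsum_mul_abs_pairing {C : ℝ} (hr0 : ∀ n, 0 ≤ r n) (hrsum : Summable r)
    (hv1 : ∀ n, Summable fun k => |v n k|) (hv2 : ∀ n, ∑' k, |v n k| = 1)
    {g : ℕ → ℕ → ℝ} (hb : ∀ m k, |g m k| ≤ C) (hg : Tendsto g atTop (𝓝 f)) :
    Tendsto (fun m => ∑' n, r n * |pairing (g m) (v n)|) atTop
      (𝓝 (∑' n, r n * |pairing f (v n)|)) :=
  tendsto_tsum_of_dominated_convergence (hrsum.mul_right C)
    (fun n => ((tendsto_pairing_of_tendsto_pi hb hg (hv1 n)).abs.const_mul (r n)))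
    (Eventually.of_forall fun m n => by
      rw [Real.norm_eq_abs, abs_mul, abs_abs, abs_of_nonneg (hr0 n)]
      exact mul_le_mul_of_nonneg_left
        (abs_pairing_le_of_tsum_abs_eq_one (hb m) (hv1 n) (hv2 n)) (hr0 n))

end ReadNorm

lemma mul_nonneg_of_abs_add_abs_le {a b : ℝ} (h : |a| + |b| ≤ |a + b|) : 0 ≤ a * b := by
  rcases (abs_add_eq_add_abs_iff a b).1 (le_antisymm (abs_add_le a b) h) with h | h
  · exact mul_nonneg h.1 h.2
  · exact mul_nonneg_of_nonpos_of_nonpos h.1 h.2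

/-- The quadratic `t ↦ (t a_j + a_k)(t b_j + b_k)` is nonnegative, so its discriminant
`(a_j b_k - a_k b_j)²` vanishes. -/
lemma exists_nonneg_smul_eq_of_mul_nonneg {a b : ℕ → ℝ} (ha : a ≠ 0)
    (h : ∀ j k (t : ℝ), 0 ≤ (t * a j + a k) * (t * b j + b k)) : ∃ c : ℝ, 0 ≤ c ∧ b = c • a := by
  obtain ⟨j, hj⟩ : ∃ j, a j ≠ 0 := by
    by_contra! h0
    exact ha (funext h0)
  have hcross : ∀ k, a j * b k = a k * b j := fun k => by
    have hdisc := discrim_le_zero (a := a j * b j) (b := a j * b k + a k * b j) (c := a k * b k)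
      fun t => by nlinarith [h j k t]
    rw [discrim] at hdisc
    nlinarith [sq_nonneg (a j * b k - a k * b j)]
  refine ⟨b j / a j, ?_, funext fun k => ?_⟩
  · have hjj : 0 ≤ a j * b j := by simpa using h j j 0
    have : b j / a j = a j * b j / a j ^ 2 := by field_simp
    rw [this]
    positivity
  · rw [Pi.smul_apply, smul_eq_mul, div_mul_eq_mul_div, eq_div_iff hj]
    linarith [hcross k]

lemma mul_pairing_nonneg_of_dense {v : ℕ → ℕ → ℝ} {f z : ℕ → ℝ}
    (hv1 : ∀ n, Summable fun k => |v n k|)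
    (hv2 : ∀ n, ∑' k, |v n k| = 1)
    (hdense : ∀ w : ℕ → ℝ, (Summable fun k => |w k|) → ∑' k, |w k| = 1 →
      ∀ ε > 0, ∃ n, ∑' k, |w k - v n k| < ε)
    (hf : ∀ k, |f k| ≤ 1) (hz : ∀ k, |z k| ≤ 1)
    (h : ∀ n, 0 ≤ pairing f (v n) * pairing z (v n)) {w : ℕ → ℝ}
    (hw : Summable fun k => |w k|) : 0 ≤ pairing f w * pairing z w := by
  have hunit : ∀ w : ℕ → ℝ, (Summable fun k => |w k|) → ∑' k, |w k| = 1 →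
      0 ≤ pairing f w * pairing z w := by
    intro w hw hw1
    refine le_of_forall_pos_le_add fun ε hε => ?_
    obtain ⟨n, hn⟩ := hdense w hw hw1 (ε / 2) (half_pos hε)
    have hP := abs_pairing_sub_pairing_le hf hw (hv1 n)
    have hQ := abs_pairing_sub_pairing_le hz hw (hv1 n)
    have hP' := abs_pairing_le_of_tsum_abs_eq_one hf (hv1 n) (hv2 n)
    have hQ1 := abs_pairing_le_of_tsum_abs_eq_one hz hw hw1
    set P := pairing f w
    set Q := pairing z w
    set P' := pairing f (v n)
    set Q' := pairing z (v n)
    have hdiff : |P' * Q' - P * Q| ≤ ε := calc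
      |P' * Q' - P * Q| = |(P' - P) * Q + P' * (Q' - Q)| := by ring_nf
      _ ≤ |P - P'| * 1 + 1 * |Q - Q'| := by
        rw [abs_sub_comm P, abs_sub_comm Q]
        refine (abs_add_le _ _).trans (add_le_add ?_ ?_) <;> rw [abs_mul]
        · exact mul_le_mul_of_nonneg_left hQ1 (abs_nonneg _)
        · exact mul_le_mul_of_nonneg_right hP' (abs_nonneg _)
      _ ≤ ε := by linarith
    linarith [h n, (abs_le.1 hdiff).2]
  obtain hs | hs := (tsum_nonneg fun k => abs_nonneg (w k)).eq_or_lt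
  · have hw0 : w = 0 := funext fun k =>
      abs_nonpos_iff.1 ((hw.le_tsum k fun _ _ => abs_nonneg _).trans hs.symm.le)
    simp [hw0, pairing]
  · set s := ∑' k, |w k|
    have hw1 : ∑' k, |(s⁻¹ • w) k| = 1 := by
      simp only [Pi.smul_apply, smul_eq_mul, abs_mul, abs_inv, abs_of_pos hs, tsum_mul_left]
      exact inv_mul_cancel₀ hs.ne'
    have := hunit (s⁻¹ • w) (by simpa [abs_mul] using hw.mul_left |s⁻¹|) hw1
    rw [pairing_smul_right, pairing_smul_right, mul_mul_mul_comm] at this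
    exact (mul_nonneg_iff_of_pos_left (by positivity)).1 this

section Rotundity

variable {r : ℕ → ℝ} {v : ℕ → ℕ → ℝ} {f z : ℕ → ℝ} {g : ℕ → ℕ → ℝ}

lemma mul_pairing_nonneg_of_tendsto_readNorm_add (hrpos : ∀ n, 0 < r n) (hrsum : Summable r)
    (hv1 : ∀ n, Summable fun k => |v n k|) (hv2 : ∀ n, ∑' k, |v n k| = 1)
    (hf : Tendsto f atTop (𝓝 0)) (hf1 : readNorm r v f = 1)
    (hg : ∀ m, Tendsto (g m) atTop (𝓝 0)) (hg1 : ∀ m, readNorm r v (g m) = 1)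
    (hfg : Tendsto (fun m => readNorm r v (f + g m)) atTop (𝓝 2))
    (hgz : Tendsto g atTop (𝓝 z)) (n : ℕ) :
    0 ≤ pairing f (v n) * pairing z (v n) := by
  have hr0 : ∀ n, 0 ≤ r n := fun n => (hrpos n).le
  have hfb : ∀ k, |f k| ≤ 1 := fun k => hf1 ▸ abs_le_readNorm hr0 hf k
  have hgb : ∀ m k, |g m k| ≤ 1 := fun m k => hg1 m ▸ abs_le_readNorm hr0 (hg m) k
  have hfgb : ∀ m k, |(f + g m) k| ≤ 2 := fun m k =>
    (abs_add_le _ _).trans (by linarith [hfb k, hgb m k])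
  have hpairing {h : ℕ → ℕ → ℝ} {C : ℝ} {l : ℕ → ℝ} (hb : ∀ m k, |h m k| ≤ C)
      (hl : Tendsto h atTop (𝓝 l)) :=
    (tendsto_pairing_of_tendsto_pi hb hl (hv1 n)).abs
  have hdefect : Tendsto
      (fun m => r n * (|pairing f (v n)| + |pairing (g m) (v n)| - |pairing (f + g m) (v n)|))
      atTop (𝓝 (r n * (|pairing f (v n)| + |pairing z (v n)| - |pairing (f + z) (v n)|))) :=
    (((hpairing hgb hgz).const_add _).sub
      (hpairing hfgb (tendsto_const_nhds.add hgz))).const_mul (r n)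
  have hgap : Tendsto (fun m => 2 - readNorm r v (f + g m)) atTop (𝓝 0) := by
    simpa using hfg.const_sub 2
  have hle := le_of_tendsto_of_tendsto' hdefect hgap fun m => by
    linarith [readNorm_add_add_defect_le hr0 hrsum hv1 hv2 hf (hg m) n, hg1 m]
  have hzb : ∀ k, |z k| ≤ 1 := fun k =>
    le_of_tendsto' (tendsto_pi_nhds.1 hgz k).abs fun m => hgb m k
  rw [pairing_add_left (summable_mul_of_abs_le hfb (hv1 n))
    (summable_mul_of_abs_le hzb (hv1 n))] at hle
  exact mul_nonneg_of_abs_add_abs_le (by nlinarith [hrpos n])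

lemma exists_nonneg_eq_smul_of_tendsto_readNorm_add (hrpos : ∀ n, 0 < r n) (hrsum : Summable r)
    (hv1 : ∀ n, Summable fun k => |v n k|) (hv2 : ∀ n, ∑' k, |v n k| = 1)
    (hdense : ∀ w : ℕ → ℝ, (Summable fun k => |w k|) → ∑' k, |w k| = 1 →
      ∀ ε > 0, ∃ n, ∑' k, |w k - v n k| < ε)
    (hf : Tendsto f atTop (𝓝 0)) (hf1 : readNorm r v f = 1)
    (hg : ∀ m, Tendsto (g m) atTop (𝓝 0)) (hg1 : ∀ m, readNorm r v (g m) = 1)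
    (hfg : Tendsto (fun m => readNorm r v (f + g m)) atTop (𝓝 2))
    (hgz : Tendsto g atTop (𝓝 z)) : ∃ c : ℝ, 0 ≤ c ∧ z = c • f := by
  have hr0 : ∀ n, 0 ≤ r n := fun n => (hrpos n).le
  have hfb : ∀ k, |f k| ≤ 1 := fun k => hf1 ▸ abs_le_readNorm hr0 hf k
  have hzb : ∀ k, |z k| ≤ 1 := fun k => le_of_tendsto' (tendsto_pi_nhds.1 hgz k).abs
    fun m => hg1 m ▸ abs_le_readNorm hr0 (hg m) k
  have hf0 : f ≠ 0 := by
    rintro rfl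
    simp [readNorm, supNorm, pairing] at hf1
  exact exists_nonneg_smul_eq_of_mul_nonneg hf0 fun j k t => by
    simpa only [pairing_single_add_single] using mul_pairing_nonneg_of_dense hv1 hv2 hdense hfb hzb
      (mul_pairing_nonneg_of_tendsto_readNorm_add hrpos hrsum hv1 hv2 hf hf1 hg hg1 hfg hgz)
      (summable_abs_single_add_single j k t)

lemma eq_of_tendsto_readNorm_add (hrpos : ∀ n, 0 < r n) (hrsum : Summable r)
    (hv1 : ∀ n, Summable fun k => |v n k|) (hv2 : ∀ n, ∑' k, |v n k| = 1)
    (hdense : ∀ w : ℕ → ℝ, (Summable fun k => |w k|) → ∑' k, |w k| = 1 →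
      ∀ ε > 0, ∃ n, ∑' k, |w k - v n k| < ε)
    (hf : Tendsto f atTop (𝓝 0)) (hf1 : readNorm r v f = 1)
    (hg : ∀ m, Tendsto (g m) atTop (𝓝 0)) (hg1 : ∀ m, readNorm r v (g m) = 1)
    (hfg : Tendsto (fun m => readNorm r v (f + g m)) atTop (𝓝 2))
    (hgz : Tendsto g atTop (𝓝 z)) : z = f := by
  have hr0 : ∀ n, 0 ≤ r n := fun n => (hrpos n).le
  obtain ⟨c, hc0, rfl⟩ := exists_nonneg_eq_smul_of_tendsto_readNorm_add hrpos hrsum hv1 hv2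
    hdense hf hf1 hg hg1 hfg hgz
  have hfb : ∀ k, |f k| ≤ 1 := fun k => hf1 ▸ abs_le_readNorm hr0 hf k
  have hgb : ∀ m k, |g m k| ≤ 1 := fun m k => hg1 m ▸ abs_le_readNorm hr0 (hg m) k
  set S := ∑' n, r n * |pairing f (v n)|
  have hsupf : supNorm f = 1 - S := by rw [← hf1, readNorm]; ring
  have hS : S < 1 := by
    obtain ⟨k, hk⟩ : ∃ k, f k ≠ 0 := by
      by_contra! h0
      simp [funext h0, readNorm, supNorm, pairing] at hf1
    linarith [abs_pos.2 hk, abs_le_supNorm hf k]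
  have hsupg : Tendsto (fun m => supNorm (g m)) atTop (𝓝 (1 - c * S)) := by
    have := (tendsto_tsum_mul_abs_pairing hr0 hrsum hv1 hv2 hgb hgz).const_sub 1
    rw [tsum_mul_abs_pairing_smul, abs_of_nonneg hc0] at this
    refine this.congr fun m => ?_
    rw [← hg1 m, readNorm]; ring
  have hsupfg : Tendsto (fun m => supNorm (f + g m)) atTop (𝓝 (2 - (1 + c) * S)) := by
    have hfgb : ∀ m k, |(f + g m) k| ≤ 2 := fun m k =>
      (abs_add_le _ _).trans (by linarith [hfb k, hgb m k])
    have := hfg.sub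
      (tendsto_tsum_mul_abs_pairing hr0 hrsum hv1 hv2 hfgb (tendsto_const_nhds.add hgz))
    rw [show f + c • f = (1 + c) • f by rw [add_smul, one_smul], tsum_mul_abs_pairing_smul,
      abs_of_nonneg (by positivity)] at this
    refine this.congr fun m => ?_
    rw [readNorm]; ring
  have hc_le : c ≤ 1 := by
    have hcf : c * supNorm f ≤ 1 - c * S := by
      rw [supNorm, Real.mul_iSup_of_nonneg hc0]
      refine ciSup_le fun k => ?_
      have := le_of_tendsto_of_tendsto' (tendsto_pi_nhds.1 hgz k).abs hsupg
        fun m => abs_le_supNorm (hg m) k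
      rwa [Pi.smul_apply, smul_eq_mul, abs_mul, abs_of_nonneg hc0] at this
    nlinarith
  have hc_ge : 1 ≤ c := by
    have hbound : ∀ k, |f k + (c • f) k| ≤ (1 + c) * (1 - S) := fun k => by
      rw [Pi.smul_apply, smul_eq_mul, ← one_add_mul, abs_mul, abs_of_nonneg (by positivity)]
      exact mul_le_mul_of_nonneg_left (hsupf ▸ abs_le_supNorm hf k) (by positivity)
    rcases le_max_iff.1 (le_max_of_tendsto_supNorm_add hf hg hgz hbound hsupfg hsupg) with h | h
    · nlinarith
    · linarith
  rw [le_antisymm hc_le hc_ge, one_smul]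

theorem tendsto_of_tendsto_readNorm_add (hrpos : ∀ n, 0 < r n) (hrsum : Summable r)
    (hv1 : ∀ n, Summable fun k => |v n k|) (hv2 : ∀ n, ∑' k, |v n k| = 1)
    (hdense : ∀ w : ℕ → ℝ, (Summable fun k => |w k|) → ∑' k, |w k| = 1 →
      ∀ ε > 0, ∃ n, ∑' k, |w k - v n k| < ε)
    (hf : Tendsto f atTop (𝓝 0)) (hf1 : readNorm r v f = 1)
    (hg : ∀ m, Tendsto (g m) atTop (𝓝 0)) (hg1 : ∀ m, readNorm r v (g m) = 1)
    (hfg : Tendsto (fun m => readNorm r v (f + g m)) atTop (𝓝 2)) :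
    Tendsto g atTop (𝓝 f) := by
  have hmem : ∀ m, g m ∈ Set.univ.pi fun _ => Set.Icc (-1 : ℝ) 1 := fun m k _ =>
    abs_le.1 (hg1 m ▸ abs_le_readNorm (fun n => (hrpos n).le) (hg m) k)
  refine tendsto_of_subseq_tendsto fun ns hns => ?_
  obtain ⟨z, -, φ, hφ, hz⟩ :=
    (isCompact_univ_pi fun _ => isCompact_Icc).tendsto_subseq fun m => hmem (ns m)
  have hsub : Tendsto (ns ∘ φ) atTop atTop := hns.comp hφ.tendsto_atTop
  refine ⟨φ, ?_⟩
  rwa [eq_of_tendsto_readNorm_add hrpos hrsum hv1 hv2 hdense hf hf1 (fun _ => hg _)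
    (fun _ => hg1 _) (hfg.comp hsub) hz] at hz

end Rotundity

section DualRepresentation

variable {X : Type*} [NormedAddCommGroup X] [NormedSpace ℝ X] {e : X →ₗ[ℝ] (ℕ → ℝ)}
  {δ : ℕ → X} {C : ℝ}

lemma map_sum_smul_of_map_eq_single (hδ : ∀ k, e (δ k) = Pi.single k 1) (c : ℕ → ℝ) (N : ℕ) :
    e (∑ k ∈ Finset.range N, c k • δ k) = fun j => if j < N then c j else 0 := by
  funext j
  simp [hδ, Finset.sum_apply, Pi.single_apply]

lemma summable_abs_map_of_map_eq_single (hC0 : 0 ≤ C) (hC : ∀ x, ‖x‖ ≤ C * supNorm (e x))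
    (hδ : ∀ k, e (δ k) = Pi.single k 1) (φ : StrongDual ℝ X) :
    Summable fun k => |φ (δ k)| := by
  refine summable_of_sum_range_le (c := ‖φ‖ * C) (fun _ => abs_nonneg _) fun N => ?_
  set s : ℕ → ℝ := fun k => SignType.sign (φ (δ k))
  have hs : supNorm (e (∑ k ∈ Finset.range N, s k • δ k)) ≤ 1 := by
    rw [map_sum_smul_of_map_eq_single hδ]
    refine supNorm_le zero_le_one fun j => ?_
    split_ifs
    · simp only [s]
      generalize SignType.sign (φ (δ j)) = σ
      cases σ <;> simp
    · simp
  calc ∑ k ∈ Finset.range N, |φ (δ k)| = φ (∑ k ∈ Finset.range N, s k • δ k) := by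
        simp [s, map_sum, sign_mul_self]
    _ ≤ ‖φ‖ * ‖∑ k ∈ Finset.range N, s k • δ k‖ := (le_abs_self _).trans (φ.le_opNorm _)
    _ ≤ ‖φ‖ * (C * 1) := by gcongr; exact (hC _).trans (by gcongr)
    _ = ‖φ‖ * C := by ring

lemma tendsto_pi_single_atTop (k : ℕ) (a : ℝ) : Tendsto (Pi.single k a : ℕ → ℝ) atTop (𝓝 0) :=
  tendsto_const_nhds.congr' <| (eventually_gt_atTop k).mono fun j hj => by simp [hj.ne']

lemma exists_summable_abs_forall_eq_pairing (hC0 : 0 ≤ C) (hC : ∀ x, ‖x‖ ≤ C * supNorm (e x))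
    (hc0 : ∀ x, Tendsto (e x) atTop (𝓝 0))
    (hsurj : ∀ f : ℕ → ℝ, Tendsto f atTop (𝓝 0) → ∃ x, e x = f) (φ : StrongDual ℝ X) :
    ∃ w : ℕ → ℝ, (Summable fun k => |w k|) ∧ ∀ u, φ u = pairing (e u) w := by
  choose δ hδ using fun k => hsurj _ (tendsto_pi_single_atTop k 1)
  have hw := summable_abs_map_of_map_eq_single hC0 hC hδ φ
  refine ⟨fun k => φ (δ k), hw, fun u => ?_⟩
  set t : ℕ → X := fun N => ∑ k ∈ Finset.range N, e u k • δ k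
  have htail : ∀ N, e (u - t N) = fun j => if j < N then 0 else e u j := fun N => by
    funext j
    simp only [t, map_sub, map_sum_smul_of_map_eq_single hδ, Pi.sub_apply]
    split_ifs <;> simp
  have ht : Tendsto t atTop (𝓝 u) := by
    refine tendsto_iff_norm_sub_tendsto_zero.2 <| squeeze_zero (fun _ => norm_nonneg _)
      (fun N => (norm_sub_rev (t N) u).trans_le (hC _)) ?_
    simpa [htail] using (tendsto_supNorm_tail (hc0 u)).const_mul C
  have hpartial : Tendsto (fun N => φ (t N)) atTop (𝓝 (pairing (e u) fun k => φ (δ k))) := by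
    simpa [t, map_sum, pairing] using
      (summable_mul_of_abs_le (abs_le_supNorm (hc0 u)) hw).hasSum.tendsto_sum_nat
  exact tendsto_nhds_unique ((φ.continuous.tendsto u).comp ht) hpartial

end DualRepresentation

theorem read_space_WLUR_general
    (r : ℕ → ℝ) (hrpos : ∀ n, 0 < r n) (hrsum : Summable r)
    (v : ℕ → ℕ → ℝ) (hv1 : ∀ n, Summable fun k => |v n k|)
    (hv2 : ∀ n, ∑' k, |v n k| = 1)
    (hdense : ∀ w : ℕ → ℝ, (Summable fun k => |w k|) → ∑' k, |w k| = 1 →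
      ∀ ε > 0, ∃ n, ∑' k, |w k - v n k| < ε)
    (X : Type*) [NormedAddCommGroup X] [NormedSpace ℝ X]
    (e : X →ₗ[ℝ] (ℕ → ℝ))
    (hc0 : ∀ x, Tendsto (e x) atTop (𝓝 0))
    (hsurj : ∀ f : ℕ → ℝ, Tendsto f atTop (𝓝 0) → ∃ x, e x = f)
    (hnorm : ∀ x, ‖x‖ = readNorm r v (e x))
    (x : X) (hx : ‖x‖ = 1) (y : ℕ → X) (hy : ∀ m, ‖y m‖ = 1)
    (hsum : Tendsto (fun m => ‖x + y m‖) atTop (𝓝 2)) :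
    ∀ f : StrongDual ℝ X, Tendsto (fun m => f (y m)) atTop (𝓝 (f x)) := by
  intro φ
  have hr0 : ∀ n, 0 ≤ r n := fun n => (hrpos n).le
  have hy1 : ∀ m, readNorm r v (e (y m)) = 1 := fun m => hnorm (y m) ▸ hy m
  obtain ⟨w, hw, hφ⟩ := exists_summable_abs_forall_eq_pairing
    (add_nonneg zero_le_one (tsum_nonneg hr0))
    (fun u => hnorm u ▸ readNorm_le hr0 hrsum hv1 hv2 (hc0 u)) hc0 hsurj φ
  have hconv : Tendsto (fun m => e (y m)) atTop (𝓝 (e x)) :=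
    tendsto_of_tendsto_readNorm_add hrpos hrsum hv1 hv2 hdense (hc0 x) (hnorm x ▸ hx)
      (fun m => hc0 (y m)) hy1 (by simpa only [hnorm, map_add] using hsum)
  simp only [hφ]
  exact tendsto_pairing_of_tendsto_pi
    (fun m k => hy1 m ▸ abs_le_readNorm hr0 (hc0 (y m)) k) hconv hw

/-- Read's space `ℛ = (c₀, |||·|||)` is weakly locally uniformly rotund: if `x` and a
sequence `(y_m)` lie in the unit sphere of `ℛ` and `|||x + y_m||| → 2`, then `(y_m)`
converges weakly to `x`. -/
theorem read_space_WLUR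
    (r : ℕ → ℝ) (hrpos : ∀ n, 0 < r n) (hrsum : Summable r) (hr2 : ∑' n, r n ≤ 2)
    (v : ℕ → ℕ → ℝ) (hv1 : ∀ n, Summable fun k => |v n k|)
    (hv2 : ∀ n, ∑' k, |v n k| = 1)
    (hdense : ∀ w : ℕ → ℝ, (Summable fun k => |w k|) → ∑' k, |w k| = 1 →
      ∀ ε > 0, ∃ n, ∑' k, |w k - v n k| < ε)
    (X : Type*) [NormedAddCommGroup X] [NormedSpace ℝ X]
    (e : X →ₗ[ℝ] (ℕ → ℝ)) (hinj : Function.Injective e)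
    (hc0 : ∀ x, Tendsto (e x) atTop (𝓝 0))
    (hsurj : ∀ f : ℕ → ℝ, Tendsto f atTop (𝓝 0) → ∃ x, e x = f)
    (hnorm : ∀ x, ‖x‖ = readNorm r v (e x))
    (x : X) (hx : ‖x‖ = 1) (y : ℕ → X) (hy : ∀ m, ‖y m‖ = 1)
    (hsum : Tendsto (fun m => ‖x + y m‖) atTop (𝓝 2)) :
    ∀ f : StrongDual ℝ X, Tendsto (fun m => f (y m)) atTop (𝓝 (f x)) :=
  read_space_WLUR_general r hrpos hrsum v hv1 hv2 hdense X e hc0 hsurj hnorm x hx y hy hsum
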